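/- (Proposition 1, disjoint edges, same SNP-set) Let v1, v2, v3, v4 be pairwise distinct nodes and p, p' SNPs with q(p) = q(p'), and assume σ_f² + 2σ_g² + 2σ_h² > 0. Then Cor(L(v1,v2,p), L(v3,v4,p')) = σ_f²/(σ_f² + 2σ_g² + 2σ_h²). -/

import Mathlib

/-!
Each `L v v' p` with `v ≠ v'` is the sum of five distinct members of the independent family
`Sum.elim F (Sum.elim G H)`. The covariance of two such sums is the sum of the variances of the
members they share, so the variance of one edge is `σf² + 2σg² + 2σh²`, while two disjoint edges
whose SNPs lie in the same SNP-set share only `F (q p)`, giving covariance `σf²`.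
-/

open MeasureTheory ProbabilityTheory

/-- Covariance of two real random variables: `Cov(X,Y) = E[(X - E X)(Y - E Y)]`. -/
noncomputable def cov {Ω : Type*} [MeasurableSpace Ω] (μ : Measure Ω) (X Y : Ω → ℝ) : ℝ :=
  ∫ ω, (X ω - ∫ x, X x ∂μ) * (Y ω - ∫ x, Y x ∂μ) ∂μ

/-- Pearson correlation: `Cor(X,Y) = Cov(X,Y) / (Var(X)^{1/2} Var(Y)^{1/2})`. -/
noncomputable def cor {Ω : Type*} [MeasurableSpace Ω] (μ : Measure Ω) (X Y : Ω → ℝ) : ℝ :=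
  cov μ X Y / (Real.sqrt (variance X μ) * Real.sqrt (variance Y μ))

open Finset

section Moments

variable {Ω ι : Type*} [MeasurableSpace Ω] {μ : Measure Ω}

lemma cov_eq_covariance (X Y : Ω → ℝ) : cov μ X Y = cov[X, Y; μ] := rfl

lemma cor_of_variance_eq {X Y : Ω → ℝ} {a : ℝ} (hX : Var[X; μ] = a) (hY : Var[Y; μ] = a) :
    cor μ X Y = cov[X, Y; μ] / a := by
  have ha : 0 ≤ a := hX ▸ variance_nonneg X μ
  rw [cor, hX, hY, Real.mul_self_sqrt ha, cov_eq_covariance]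

lemma covariance_sum_sum_eq_sum_inter [IsProbabilityMeasure μ] [DecidableEq ι]
    {X : ι → Ω → ℝ} (hmem : ∀ i, MemLp (X i) 2 μ)
    (hindep : Pairwise fun i j ↦ IndepFun (X i) (X j) μ) (s t : Finset ι) :
    cov[∑ i ∈ s, X i, ∑ j ∈ t, X j; μ] = ∑ i ∈ s ∩ t, Var[X i; μ] := by
  have hdiag : ∀ i j, cov[X i, X j; μ] = if i = j then Var[X i; μ] else 0 := by
    intro i j
    split_ifs with hij
    · subst hij; exact covariance_self (hmem i).aemeasurable
    · exact (hindep hij).covariance_eq_zero (hmem i) (hmem j)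
  simp_rw [covariance_sum_sum' (fun i _ ↦ hmem i) (fun j _ ↦ hmem j), hdiag, sum_ite_eq,
    sum_ite_mem]

end Moments

section Edges

variable {Q V P : Type*} [DecidableEq Q] [DecidableEq V] [DecidableEq P]

/-- The indices of the five independent terms of `L v v' p` in the family
`Sum.elim F (Sum.elim G H)`. -/
def edgeSupport (q : P → Q) (v v' : V) (p : P) : Finset (Q ⊕ (V ⊕ V × P)) :=
  {.inl (q p), .inr (.inl v), .inr (.inl v'), .inr (.inr (v, p)), .inr (.inr (v', p))}

lemma sum_edgeSupport {M : Type*} [AddCommMonoid M] (f : Q ⊕ (V ⊕ V × P) → M) (q : P → Q)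
    {v v' : V} (hv : v ≠ v') (p : P) :
    ∑ i ∈ edgeSupport q v v' p, f i = f (.inl (q p)) + f (.inr (.inl v)) + f (.inr (.inl v'))
      + f (.inr (.inr (v, p))) + f (.inr (.inr (v', p))) := by
  simp [edgeSupport, sum_insert, hv, add_assoc]

lemma edgeSupport_inter_of_disjoint {q : P → Q} {p p' : P} (hq : q p = q p') {v1 v2 v3 v4 : V}
    (h13 : v1 ≠ v3) (h14 : v1 ≠ v4) (h23 : v2 ≠ v3) (h24 : v2 ≠ v4) :
    edgeSupport q v1 v2 p ∩ edgeSupport q v3 v4 p' = {.inl (q p)} := by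
  ext i
  simp only [edgeSupport, mem_inter, mem_insert, mem_singleton]
  aesop

end Edges

theorem nrss_cor_disjoint_edges_same_set_general
    {Ω Q V P : Type*} [MeasurableSpace Ω]
    (μ : Measure Ω) [IsProbabilityMeasure μ]
    (q : P → Q)
    (F : Q → Ω → ℝ) (G : V → Ω → ℝ) (H : V × P → Ω → ℝ)
    (σf2 σg2 σh2 : ℝ)
    (hIndep : iIndepFun
      (Sum.elim F (Sum.elim G H)) μ)
    (hFmem : ∀ i, MemLp (F i) 2 μ)
    (hGmem : ∀ i, MemLp (G i) 2 μ)
    (hHmem : ∀ i, MemLp (H i) 2 μ)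
    (hFvar : ∀ i, variance (F i) μ = σf2)
    (hGvar : ∀ i, variance (G i) μ = σg2)
    (hHvar : ∀ i, variance (H i) μ = σh2)
    (L : V → V → P → Ω → ℝ)
    (hL : ∀ v v' p ω, L v v' p ω = F (q p) ω + G v ω + G v' ω + H (v, p) ω + H (v', p) ω)
    (v1 v2 v3 v4 : V) (h12 : v1 ≠ v2) (h13 : v1 ≠ v3) (h14 : v1 ≠ v4)
    (h23 : v2 ≠ v3) (h24 : v2 ≠ v4) (h34 : v3 ≠ v4)
    (p p' : P) (hq : q p = q p') :
    cor μ (L v1 v2 p) (L v3 v4 p') = σf2 / (σf2 + 2 * σg2 + 2 * σh2) := by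
  classical
  set X := Sum.elim F (Sum.elim G H)
  have hmem : ∀ i, MemLp (X i) 2 μ := by
    rintro (a | b | c)
    exacts [hFmem a, hGmem b, hHmem c]
  have hpair : Pairwise fun i j ↦ IndepFun (X i) (X j) μ := fun i j hij ↦ hIndep.indepFun hij
  have hL_sum : ∀ {v v'} p, v ≠ v' → L v v' p = ∑ i ∈ edgeSupport q v v' p, X i := by
    intro v v' p hv
    rw [sum_edgeSupport X q hv]
    ext ω
    simp [hL, X]
  have hvar : ∀ {v v'} p, v ≠ v' → Var[L v v' p; μ] = σf2 + 2 * σg2 + 2 * σh2 := by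
    intro v v' p hv
    rw [hL_sum p hv, IndepFun.variance_sum (fun i _ ↦ hmem i) fun i _ j _ hij ↦ hpair hij,
      sum_edgeSupport _ q hv]
    simp only [X, Sum.elim_inl, Sum.elim_inr, hFvar, hGvar, hHvar]
    ring
  rw [cor_of_variance_eq (hvar p h12) (hvar p' h34), hL_sum p h12, hL_sum p' h34,
    covariance_sum_sum_eq_sum_inter hmem hpair, edgeSupport_inter_of_disjoint hq h13 h14 h23 h24,
    sum_singleton]
  simp [X, hFvar]

/-- Proposition 1, disjoint edges, same SNP-set. -/
theorem nrss_cor_disjoint_edges_same_set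
    {Ω Q V P : Type*} [MeasurableSpace Ω]
    (μ : Measure Ω) [IsProbabilityMeasure μ]
    (q : P → Q)
    (F : Q → Ω → ℝ) (G : V → Ω → ℝ) (H : V × P → Ω → ℝ)
    (σf2 σg2 σh2 : ℝ)
    (hIndep : iIndepFun
      (Sum.elim F (Sum.elim G H)) μ)
    (hFmem : ∀ i, MemLp (F i) 2 μ)
    (hGmem : ∀ i, MemLp (G i) 2 μ)
    (hHmem : ∀ i, MemLp (H i) 2 μ)
    (hFvar : ∀ i, variance (F i) μ = σf2)
    (hGvar : ∀ i, variance (G i) μ = σg2)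
    (hHvar : ∀ i, variance (H i) μ = σh2)
    (L : V → V → P → Ω → ℝ)
    (hL : ∀ v v' p ω, L v v' p ω = F (q p) ω + G v ω + G v' ω + H (v, p) ω + H (v', p) ω)
    (v1 v2 v3 v4 : V) (h12 : v1 ≠ v2) (h13 : v1 ≠ v3) (h14 : v1 ≠ v4)
    (h23 : v2 ≠ v3) (h24 : v2 ≠ v4) (h34 : v3 ≠ v4)
    (p p' : P) (hq : q p = q p')
    (hpos : 0 < σf2 + 2 * σg2 + 2 * σh2) :
    cor μ (L v1 v2 p) (L v3 v4 p') = σf2 / (σf2 + 2 * σg2 + 2 * σh2) :=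
  nrss_cor_disjoint_edges_same_set_general μ q F G H σf2 σg2 σh2 hIndep hFmem hGmem hHmem hFvar
    hGvar hHvar L hL v1 v2 v3 v4 h12 h13 h14 h23 h24 h34 p p' hq
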